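/- For every RDF graph G, every non-recursive SHACL document M, and any two of the four extended semantics α and β among brave-partial, brave-total, cautious-partial and cautious-total: G is valid with respect to M under α if and only if G is valid with respect to M under β. -/

import Mathlib

/-!
STATEMENT 2.  For every graph and every non-recursive SHACL document, the four
extended semantics (brave-partial, brave-total, cautious-partial,
cautious-total) coincide.
-/

namespace SHACL

/-- RDF nodes: a single infinite domain of RDF terms. -/
abbrev Node := ℕ

/-- Shape names. -/
abbrev SName := ℕ

/-- An RDF graph: a set of (subject, predicate, object) triples. -/
abbrev Graph := Set (Node × Node × Node)

/-- Kleene's three truth values. -/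
inductive K3 | t | f | u
deriving DecidableEq

/-- An assignment maps each node and shape name to `some true` (the shape
literal `s` is assigned), `some false` (the literal `¬s` is assigned) or
`none` (neither); this representation guarantees that `s` and `¬s` are never
assigned simultaneously. -/
abbrev Assignment := Node → SName → Option Bool

/-- SHACL constraints (abstract core syntax): the empty constraint, shape
references, equality with a constant, a graph atom (existence of a given
triple), existential quantification along a property, negation and
conjunction. -/
inductive Constraint
  | top
  | ref (s : SName)
  | eqc (c : Node)
  | hasTriple (p o : Node)
  | exPath (p : Node) (d : Constraint)
  | not (d : Constraint)
  | and (d₁ d₂ : Constraint)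

open Classical in
/-- Three-valued (Kleene) evaluation `⟦d⟧^{G,σ}(n)` of a constraint at a node:
a shape reference `s(x)` is `True` if `s ∈ σ(x)`, `False` if `¬s ∈ σ(x)` and
`Undefined` otherwise. -/
noncomputable def eval (G : Graph) (σ : Assignment) : Constraint → Node → K3
  | .top, _ => .t
  | .ref s, n =>
      match σ n s with
      | some true => .t
      | some false => .f
      | none => .u
  | .eqc c, n => if n = c then .t else .f
  | .hasTriple p o, n => if (n, p, o) ∈ G then .t else .f
  | .exPath p d, n =>
      if ∃ m, (n, p, m) ∈ G ∧ eval G σ d m = .t then .t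
      else if ∀ m, (n, p, m) ∈ G → eval G σ d m = .f then .f
      else .u
  | .not d, n =>
      match eval G σ d n with
      | .t => .f
      | .f => .t
      | .u => .u
  | .and d₁ d₂, n =>
      match eval G σ d₁ n, eval G σ d₂ n with
      | .f, _ => .f
      | _, .f => .f
      | .t, .t => .t
      | _, _ => .u

/-- A SHACL shape: a name, a target definition (a unary query over graphs)
and a constraint. -/
structure Shape where
  name : SName
  target : Graph → Set Node
  constraint : Constraint

/-- A SHACL document: a set of shapes. -/
abbrev Document := Set Shape

/-- `M̃`: the document `M` with every target definition replaced by the empty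
target. -/
def minusTargets (M : Document) : Document :=
  (fun sh => { name := sh.name, target := fun _ => (∅ : Set Node),
               constraint := sh.constraint : Shape }) '' M

/-- Faithfulness of an assignment `σ` w.r.t. a graph `G` and a document `M`:
(1) for every shape `⟨s,t,d⟩` of `M` and node `n`, `s ∈ σ(n)` iff
    `⟦d⟧^{G,σ}(n) = True` and `¬s ∈ σ(n)` iff `⟦d⟧^{G,σ}(n) = False`;
(2) every node targeted by `t` in `G` satisfies `s ∈ σ(n)`. -/
def Faithful (G : Graph) (σ : Assignment) (M : Document) : Prop :=
  (∀ sh ∈ M, ∀ n : Node,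
      (σ n sh.name = some true ↔ eval G σ sh.constraint n = .t) ∧
      (σ n sh.name = some false ↔ eval G σ sh.constraint n = .f)) ∧
  (∀ sh ∈ M, ∀ n ∈ sh.target G, σ n sh.name = some true)

/-- The shape names directly referenced by a constraint. -/
def Constraint.refs : Constraint → Set SName
  | .ref s => {s}
  | .not d => d.refs
  | .and d₁ d₂ => d₁.refs ∪ d₂.refs
  | .exPath _ d => d.refs
  | _ => ∅

/-- The shape names of a document. -/
def namesOf (M : Document) : Set SName := Shape.name '' M

/-- `s₁` directly references `s₂` in `M`: some shape of `M` named `s₁` has a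
constraint mentioning `s₂`. -/
def refersTo (M : Document) (s₁ s₂ : SName) : Prop :=
  ∃ sh ∈ M, sh.name = s₁ ∧ s₂ ∈ sh.constraint.refs

/-- A document is recursive if some shape (transitively) references itself. -/
def Recursive (M : Document) : Prop :=
  ∃ s, Relation.TransGen (refersTo M) s s

/-- An assignment is total w.r.t. a set of shape names if it assigns either
`s` or `¬s` to every node, for every shape name `s` in the set. -/
def Assignment.TotalOn (σ : Assignment) (S : Set SName) : Prop :=
  ∀ n : Node, ∀ s ∈ S, (σ n s).isSome


/-- The four extended semantics for (possibly recursive) SHACL. -/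
inductive Semantics | bravePartial | braveTotal | cautiousPartial | cautiousTotal

/-- Validity of a graph w.r.t. a document under each of the four extended
semantics. -/
def Valid : Semantics → Graph → Document → Prop
  | .bravePartial, G, M => ∃ σ : Assignment, Faithful G σ M
  | .braveTotal, G, M => ∃ σ : Assignment, σ.TotalOn (namesOf M) ∧ Faithful G σ M
  | .cautiousPartial, G, M =>
      (∃ σ : Assignment, Faithful G σ M) ∧
      (∀ σ : Assignment, Faithful G σ (minusTargets M) → Faithful G σ M)
  | .cautiousTotal, G, M =>
      (∃ σ : Assignment, σ.TotalOn (namesOf M) ∧ Faithful G σ M) ∧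
      (∀ σ : Assignment, σ.TotalOn (namesOf M) →
          Faithful G σ (minusTargets M) → Faithful G σ M)

/-!
Without recursion the "references" relation between the shape names of `M` is well-founded, since
`M` is finite. Condition (1) of faithfulness fixes the value of an assignment at a shape name from
its values at the names that shape references, so by well-founded induction all assignments
satisfying (1) agree on the shape names of `M`, and they are total there. Recursion along the same
relation builds one such assignment `σ₀`. Every one of the four semantics then says exactly that
`σ₀` satisfies the targets of `M`.
-/

namespace K3

def toOption : K3 → Option Bool
  | .t => some true
  | .f => some false
  | .u => none

theorem isSome_toOption {k : K3} : k.toOption.isSome ↔ k ≠ .u := by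
  cases k <;> simp [toOption]

theorem eq_toOption_iff {o : Option Bool} {k : K3} :
    ((o = some true ↔ k = .t) ∧ (o = some false ↔ k = .f)) ↔ o = k.toOption := by
  rcases o with _ | _ | _ <;> cases k <;> simp [toOption]

end K3

theorem eval_congr (G : Graph) {σ₁ σ₂ : Assignment} {d : Constraint}
    (h : ∀ n, ∀ s ∈ d.refs, σ₁ n s = σ₂ n s) (n : Node) :
    eval G σ₁ d n = eval G σ₂ d n := by
  induction d generalizing n with
  | ref s => simp only [eval, h n s rfl]
  | exPath p d ih =>
    have hd : eval G σ₁ d = eval G σ₂ d := funext (ih h)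
    simp only [eval]
    rw [hd]
  | not d ih => simp only [eval, ih h n]
  | and d₁ d₂ ih₁ ih₂ =>
    simp only [eval, ih₁ (fun n s hs => h n s (Or.inl hs)) n,
      ih₂ (fun n s hs => h n s (Or.inr hs)) n]
  | _ => rfl

theorem eval_ne_u (G : Graph) {σ : Assignment} {d : Constraint}
    (h : ∀ n, ∀ s ∈ d.refs, (σ n s).isSome) (n : Node) :
    eval G σ d n ≠ .u := by
  induction d generalizing n with
  | top => simp [eval]
  | ref s =>
    obtain ⟨b, hb⟩ := Option.isSome_iff_exists.1 (h n s rfl)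
    cases b <;> simp [eval, hb]
  | eqc c => simp only [eval]; split <;> simp
  | hasTriple p o => simp only [eval]; split <;> simp
  | exPath p d ih =>
    have two_valued : ∀ m, eval G σ d m = .t ∨ eval G σ d m = .f := fun m => by
      have := ih h m
      cases hm : eval G σ d m <;> simp_all
    simp only [eval]
    split_ifs with hex hall
    · simp
    · simp
    · refine absurd (fun m hm => ?_) hall
      exact (two_valued m).resolve_left fun ht => hex ⟨m, hm, ht⟩
  | not d ih =>
    have := ih h n
    simp only [eval]
    cases hd : eval G σ d n <;> simp_all
  | and d₁ d₂ ih₁ ih₂ =>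
    have h₁ := ih₁ (fun n s hs => h n s (Or.inl hs)) n
    have h₂ := ih₂ (fun n s hs => h n s (Or.inr hs)) n
    simp only [eval]
    cases hd₁ : eval G σ d₁ n <;> cases hd₂ : eval G σ d₂ n <;> simp_all

/-- Condition (1) of faithfulness. -/
def IsFixpoint (G : Graph) (σ : Assignment) (M : Document) : Prop :=
  ∀ sh ∈ M, ∀ n, σ n sh.name = (eval G σ sh.constraint n).toOption

theorem faithful_iff {G : Graph} {σ : Assignment} {M : Document} :
    Faithful G σ M ↔
      IsFixpoint G σ M ∧ ∀ sh ∈ M, ∀ n ∈ sh.target G, σ n sh.name = some true := by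
  simp only [Faithful, IsFixpoint, K3.eq_toOption_iff]

theorem faithful_minusTargets_iff {G : Graph} {σ : Assignment} {M : Document} :
    Faithful G σ (minusTargets M) ↔ IsFixpoint G σ M := by
  simp [faithful_iff, IsFixpoint, minusTargets]

theorem wellFounded_of_finite_of_transGen_irrefl {α : Type*} {r : α → α → Prop} {S : Set α}
    (hS : S.Finite) (hr : ∀ a b, r a b → a ∈ S ∧ b ∈ S)
    (hirr : ∀ a, ¬ Relation.TransGen r a a) : WellFounded r :=
  haveI : IsStrictOrder α (Relation.TransGen r) :=
    { irrefl := hirr, trans := fun _ _ _ => Relation.TransGen.trans }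
  Subrelation.wf (fun h => ⟨Relation.TransGen.single h, hr _ _ h⟩)
    (Set.wellFoundedOn_iff.1 hS.wellFoundedOn)

theorem wellFounded_flip_refersTo {M : Document} (hfin : M.Finite)
    (hclosed : ∀ sh ∈ M, Constraint.refs sh.constraint ⊆ namesOf M) (hnr : ¬ Recursive M) :
    WellFounded (flip (refersTo M)) :=
  wellFounded_of_finite_of_transGen_irrefl (hfin.image Shape.name)
    (fun _ _ ⟨sh, hsh, hname, href⟩ => ⟨hclosed sh hsh href, sh, hsh, hname⟩)
    (fun s hs => hnr ⟨s, Relation.transGen_swap.1 hs⟩)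

section Fixpoints

variable {G : Graph} {M : Document} (hwf : WellFounded (flip (refersTo M)))
  (hclosed : ∀ sh ∈ M, Constraint.refs sh.constraint ⊆ namesOf M)
include hwf hclosed

theorem IsFixpoint.totalOn {σ : Assignment} (hσ : IsFixpoint G σ M) :
    σ.TotalOn (namesOf M) := by
  suffices ∀ s ∈ namesOf M, ∀ n, (σ n s).isSome from fun n s hs => this s hs n
  intro s
  induction s using hwf.induction with
  | _ s ih =>
    rintro ⟨sh, hsh, rfl⟩ n
    rw [hσ sh hsh n, K3.isSome_toOption]
    exact eval_ne_u G (fun n' s' hs' => ih s' ⟨sh, hsh, rfl, hs'⟩ (hclosed sh hsh hs') n') n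

theorem IsFixpoint.eqOn_namesOf {σ₁ σ₂ : Assignment} (h₁ : IsFixpoint G σ₁ M)
    (h₂ : IsFixpoint G σ₂ M) : ∀ s ∈ namesOf M, ∀ n, σ₁ n s = σ₂ n s := by
  intro s
  induction s using hwf.induction with
  | _ s ih =>
    rintro ⟨sh, hsh, rfl⟩ n
    rw [h₁ sh hsh n, h₂ sh hsh n,
      eval_congr G (fun n' s' hs' => ih s' ⟨sh, hsh, rfl, hs'⟩ (hclosed sh hsh hs') n') n]

theorem IsFixpoint.faithful_iff_faithful {σ₁ σ₂ : Assignment} (h₁ : IsFixpoint G σ₁ M)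
    (h₂ : IsFixpoint G σ₂ M) : Faithful G σ₁ M ↔ Faithful G σ₂ M := by
  rw [faithful_iff, faithful_iff]
  refine and_congr (iff_of_true h₁ h₂) (forall₂_congr fun sh hsh => ?_)
  simp only [h₁.eqOn_namesOf hwf hclosed h₂ sh.name ⟨sh, hsh, rfl⟩]

theorem IsFixpoint.valid_iff {σ₀ : Assignment} (h₀ : IsFixpoint G σ₀ M) (γ : Semantics) :
    Valid γ G M ↔ Faithful G σ₀ M := by
  have transfer : ∀ σ, Faithful G σ M → Faithful G σ₀ M := fun σ hσ =>
    ((faithful_iff.1 hσ).1.faithful_iff_faithful hwf hclosed h₀).1 hσ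
  have cautious : Faithful G σ₀ M → ∀ σ, Faithful G σ (minusTargets M) → Faithful G σ M :=
    fun h σ hσ => ((faithful_minusTargets_iff.1 hσ).faithful_iff_faithful hwf hclosed h₀).2 h
  have htotal := h₀.totalOn hwf hclosed
  cases γ with
  | bravePartial => exact ⟨fun ⟨σ, hσ⟩ => transfer σ hσ, fun h => ⟨σ₀, h⟩⟩
  | braveTotal => exact ⟨fun ⟨σ, _, hσ⟩ => transfer σ hσ, fun h => ⟨σ₀, htotal, h⟩⟩
  | cautiousPartial =>
    exact ⟨fun ⟨⟨σ, hσ⟩, _⟩ => transfer σ hσ, fun h => ⟨⟨σ₀, h⟩, cautious h⟩⟩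
  | cautiousTotal =>
    exact ⟨fun ⟨⟨σ, _, hσ⟩, _⟩ => transfer σ hσ,
      fun h => ⟨⟨σ₀, htotal, h⟩, fun σ _ => cautious h σ⟩⟩

end Fixpoints

open Classical in
noncomputable def stratified (G : Graph) {M : Document} (hwf : WellFounded (flip (refersTo M))) :
    Assignment :=
  fun n s => hwf.fix (C := fun _ => Node → Option Bool)
    (fun s earlier n =>
      if h : ∃ sh ∈ M, sh.name = s then
        (eval G (fun n' s' => if h' : refersTo M s s' then earlier s' h' n' else none)
          h.choose.constraint n).toOption
      else none) s n

theorem isFixpoint_stratified (G : Graph) {M : Document}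
    (hname : ∀ sh₁ ∈ M, ∀ sh₂ ∈ M, Shape.name sh₁ = Shape.name sh₂ → sh₁ = sh₂)
    (hwf : WellFounded (flip (refersTo M))) : IsFixpoint G (stratified G hwf) M := by
  intro sh hsh n
  have hex : ∃ sh' ∈ M, sh'.name = sh.name := ⟨sh, hsh, rfl⟩
  have hchoose : hex.choose = sh := hname _ hex.choose_spec.1 _ hsh hex.choose_spec.2
  rw [stratified, WellFounded.fix_eq, dif_pos hex, hchoose]
  refine congrArg K3.toOption (eval_congr G (fun n' s' hs' => ?_) n)
  rw [dif_pos ⟨sh, hsh, rfl, hs'⟩]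
  rfl

/-- Theorem on non-recursive documents: for any graph `G`,
non-recursive SHACL document `M` and extended semantics `α` and `β`,
`G ⊨ M` under `α` iff `G ⊨ M` under `β`. -/
theorem nonRecursive_semantics_coincide
    (G : Graph) (M : Document)
    (hfin : M.Finite)
    (hname : ∀ sh₁ ∈ M, ∀ sh₂ ∈ M, Shape.name sh₁ = Shape.name sh₂ → sh₁ = sh₂)
    (hclosed : ∀ sh ∈ M, Constraint.refs sh.constraint ⊆ namesOf M)
    (hnr : ¬ Recursive M)
    (α β : Semantics) :
    Valid α G M ↔ Valid β G M := by
  have hwf := wellFounded_flip_refersTo hfin hclosed hnr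
  have h₀ := isFixpoint_stratified G hname hwf
  exact (h₀.valid_iff hwf hclosed α).trans (h₀.valid_iff hwf hclosed β).symm

end SHACL
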